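/- arXiv:2008.06393 — 12 statements merged into one kernel-verified Lean document; each statement's English description precedes it below -/
import Mathlib

section
/- Fix θ ∈ [0, π/2]. Let Y = σz and Y' = cos θ · σz + sin θ · σx (2×2 complex Hermitian matrices). Then for every unit vector ψ ∈ ℂ², the real part of ⟨ψ, (Y + Y')ψ⟩ is at most 2·cos(θ/2), and the real part of ⟨ψ, (Y - Y')ψ⟩ is at most 2·sin(θ/2). -/
open Matrix
noncomputable def σx : Matrix (Fin 2) (Fin 2) ℂ := !![0, 1; 1, 0]
noncomputable def σz : Matrix (Fin 2) (Fin 2) ℂ := !![1, 0; 0, -1]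

theorem stmt_2 (θ : ℝ) (hθ : θ ∈ Set.Icc 0 (Real.pi / 2))
    (Y Y' : Matrix (Fin 2) (Fin 2) ℂ)
    (hY : Y = σz) (hY' : Y' = (Real.cos θ : ℂ) • σz + (Real.sin θ : ℂ) • σx)
    (ψ : Fin 2 → ℂ) (hψ : star ψ ⬝ᵥ ψ = 1) :
    (star ψ ⬝ᵥ ((Y + Y') *ᵥ ψ)).re ≤ 2 * Real.cos (θ / 2) ∧
    (star ψ ⬝ᵥ ((Y - Y') *ᵥ ψ)).re ≤ 2 * Real.sin (θ / 2) := by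
  subst hY hY'
  obtain ⟨hθ0, hθ1⟩ := hθ
  have hc : Real.cos θ = 2 * Real.cos (θ / 2) ^ 2 - 1 := by
    have := Real.cos_two_mul (θ / 2)
    rwa [show 2 * (θ / 2) = θ by ring] at this
  have hs : Real.sin θ = 2 * Real.sin (θ / 2) * Real.cos (θ / 2) := by
    have := Real.sin_two_mul (θ / 2)
    rwa [show 2 * (θ / 2) = θ by ring] at this
  simp only [dotProduct, mulVec, Fin.sum_univ_two, σx, σz, Matrix.add_apply, Matrix.sub_apply,
    Matrix.smul_apply, Pi.star_apply, Matrix.cons_val', Matrix.cons_val_zero, Matrix.cons_val_one,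
    Matrix.head_cons, Matrix.head_fin_const, Matrix.empty_val', Matrix.cons_val_fin_one,
    smul_eq_mul] at hψ ⊢
  rw [Complex.ext_iff] at hψ
  simp [Complex.ext_iff, Complex.cos_ofReal_re, Complex.sin_ofReal_re] at hψ ⊢
  obtain ⟨hn, -⟩ := hψ
  rw [hc, hs] at *
  obtain ⟨p, q, hpq⟩ : ∃ p q : ℝ, ψ 0 = ⟨p, q⟩ := ⟨(ψ 0).re, (ψ 0).im, rfl⟩
  obtain ⟨r, s, hrs⟩ : ∃ r s : ℝ, ψ 1 = ⟨r, s⟩ := ⟨(ψ 1).re, (ψ 1).im, rfl⟩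
  rw [hpq, hrs] at hn ⊢
  set ch := Real.cos (θ / 2) with hch
  set sh := Real.sin (θ / 2) with hsh
  have hpyth : ch ^ 2 + sh ^ 2 = 1 := by rw [hch, hsh]; nlinarith [Real.sin_sq_add_cos_sq (θ/2)]
  have hch0 : 0 ≤ ch := Real.cos_nonneg_of_mem_Icc
    ⟨by linarith [Real.pi_pos], by linarith [Real.pi_pos]⟩
  have hsh0 : 0 ≤ sh := Real.sin_nonneg_of_nonneg_of_le_pi (by linarith)
    (by linarith [Real.pi_pos])
  have key : (p^2+q^2-r^2-s^2)^2 + (2*(p*r+q*s))^2 + (2*(p*s-q*r))^2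
      = (p*p + q*q + (r*r + s*s))^2 := by ring
  rw [hn] at key
  constructor
  · have hin : ch * (p^2+q^2-r^2-s^2) + sh * (2*(p*r+q*s)) ≤ 1 := by
      nlinarith [sq_nonneg (ch - (p^2+q^2-r^2-s^2)), sq_nonneg (sh - 2*(p*r+q*s)),
        sq_nonneg (2*(p*s-q*r))]
    nlinarith [mul_le_mul_of_nonneg_left hin (by linarith : (0:ℝ) ≤ 2 * ch)]
  · have hin : sh * (p^2+q^2-r^2-s^2) - ch * (2*(p*r+q*s)) ≤ 1 := by
      nlinarith [sq_nonneg (sh - (p^2+q^2-r^2-s^2)), sq_nonneg (ch + 2*(p*r+q*s)),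
        sq_nonneg (2*(p*s-q*r))]
    nlinarith [mul_le_mul_of_nonneg_left hin (by linarith : (0:ℝ) ≤ 2 * sh)]
end

section
/- Fix θ ∈ [0, π/2] and let v₊ = (cos(θ/2), sin(θ/2)) and v₋ = (-sin(θ/2), cos(θ/2)) be the unit eigenvectors of cos θ · σz + sin θ · σx in ℂ². Then for every unit vector ψ = (ψ₁, ψ₂) ∈ ℂ², one has max(|ψ₁|², |ψ₂|²) + max(|⟨v₊, ψ⟩|², |⟨v₋, ψ⟩|²) ≤ 1 + cos(θ/2). -/
/-!
With `a = ‖ψ₀‖`, `b = ‖ψ₁‖`, `c = cos (θ/2)`, `s = sin (θ/2)`, the triangle inequality bounds the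
two overlaps by `c a + s b` and `s a + c b`. On the unit circle, `x² + (p x + q y)² = 1 + p t`
with `t = p (x² - y²) + 2 q x y`, and `|t| ≤ 1` by Cauchy–Schwarz, since `(x² - y², 2 x y)` is
again a unit vector. So each of the four sums hidden in the two maxima is at most `1 + c` or
`1 + |s|`, and `|s| ≤ c` because `θ/2 ≤ π/4`.
-/

open Matrix

theorem RCLike.star_dotProduct_self {𝕜 ι : Type*} [RCLike 𝕜] [Fintype ι] (v : ι → 𝕜) :
    star v ⬝ᵥ v = ((∑ i, ‖v i‖ ^ 2 : ℝ) : 𝕜) := by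
  simp [dotProduct, RCLike.conj_mul]

theorem abs_mul_add_mul_le_one_of_sq_add_sq_eq_one {x y p q : ℝ} (hxy : x ^ 2 + y ^ 2 = 1)
    (hpq : p ^ 2 + q ^ 2 = 1) : |p * (x ^ 2 - y ^ 2) + 2 * q * (x * y)| ≤ 1 := by
  have hlagrange : (p * (x ^ 2 - y ^ 2) + 2 * q * (x * y)) ^ 2
      + (q * (x ^ 2 - y ^ 2) - 2 * p * (x * y)) ^ 2
      = (p ^ 2 + q ^ 2) * (x ^ 2 + y ^ 2) ^ 2 := by
    ring
  rw [hxy, hpq] at hlagrange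
  rw [← sq_le_one_iff_abs_le_one]
  nlinarith [sq_nonneg (q * (x ^ 2 - y ^ 2) - 2 * p * (x * y))]

theorem sq_add_mul_add_mul_sq_le {x y p q : ℝ} (hxy : x ^ 2 + y ^ 2 = 1)
    (hpq : p ^ 2 + q ^ 2 = 1) : x ^ 2 + (p * x + q * y) ^ 2 ≤ 1 + |p| := by
  set t := p * (x ^ 2 - y ^ 2) + 2 * q * (x * y)
  have ht : |t| ≤ 1 := abs_mul_add_mul_le_one_of_sq_add_sq_eq_one hxy hpq
  calc x ^ 2 + (p * x + q * y) ^ 2 = 1 + p * t := by linear_combination hxy + y ^ 2 * hpq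
    _ ≤ 1 + |p| * |t| := by rw [← abs_mul]; gcongr; exact le_abs_self _
    _ ≤ 1 + |p| := by gcongr; exact mul_le_of_le_one_right (abs_nonneg p) ht

theorem norm_sq_add_norm_smul_add_smul_sq_le {E : Type*} [SeminormedAddCommGroup E]
    [NormedSpace ℝ E] {z w : E} (hzw : ‖z‖ ^ 2 + ‖w‖ ^ 2 = 1) {p q : ℝ}
    (hpq : p ^ 2 + q ^ 2 = 1) : ‖z‖ ^ 2 + ‖p • z + q • w‖ ^ 2 ≤ 1 + |p| := by
  have htri : ‖p • z + q • w‖ ≤ |p| * ‖z‖ + |q| * ‖w‖ := by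
    simpa only [norm_smul, Real.norm_eq_abs] using norm_add_le (p • z) (q • w)
  calc ‖z‖ ^ 2 + ‖p • z + q • w‖ ^ 2 ≤ ‖z‖ ^ 2 + (|p| * ‖z‖ + |q| * ‖w‖) ^ 2 := by gcongr
    _ ≤ 1 + |(|p|)| := sq_add_mul_add_mul_sq_le hzw (by simpa only [sq_abs] using hpq)
    _ = 1 + |p| := by rw [abs_abs]

theorem Real.abs_sin_le_cos {φ : ℝ} (hφ : φ ∈ Set.Icc 0 (Real.pi / 4)) : |sin φ| ≤ cos φ := by
  obtain ⟨h0, h1⟩ := hφ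
  rw [abs_of_nonneg (sin_nonneg_of_nonneg_of_le_pi h0 (by linarith [pi_pos])),
    ← cos_pi_div_two_sub]
  exact cos_le_cos_of_nonneg_of_le_pi h0 (by linarith [pi_pos]) (by linarith)

theorem stmt_3 (θ : ℝ) (hθ : θ ∈ Set.Icc 0 (Real.pi / 2))
    (vp vm : Fin 2 → ℂ)
    (hvp : vp = ![(Real.cos (θ / 2) : ℂ), (Real.sin (θ / 2) : ℂ)])
    (hvm : vm = ![-(Real.sin (θ / 2) : ℂ), (Real.cos (θ / 2) : ℂ)])
    (ψ : Fin 2 → ℂ) (hψ : star ψ ⬝ᵥ ψ = 1) :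
    max (‖ψ 0‖ ^ 2) (‖ψ 1‖ ^ 2) +
      max (‖star vp ⬝ᵥ ψ‖ ^ 2) (‖star vm ⬝ᵥ ψ‖ ^ 2) ≤
    1 + Real.cos (θ / 2) := by
  set c := Real.cos (θ / 2)
  set s := Real.sin (θ / 2)
  have hsc : |s| ≤ c := Real.abs_sin_le_cos ⟨by linarith [hθ.1], by linarith [hθ.2]⟩
  have hc : |c| = c := abs_of_nonneg ((abs_nonneg s).trans hsc)
  have hcs : c ^ 2 + s ^ 2 = 1 := Real.cos_sq_add_sin_sq _
  have hψ01 : ‖ψ 0‖ ^ 2 + ‖ψ 1‖ ^ 2 = 1 := by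
    rwa [RCLike.star_dotProduct_self, ← RCLike.ofReal_one, RCLike.ofReal_inj,
      Fin.sum_univ_two] at hψ
  have hp : star vp ⬝ᵥ ψ = c • ψ 0 + s • ψ 1 := by
    simp [hvp, dotProduct, Fin.sum_univ_two, Complex.real_smul]
  have hm : star vm ⬝ᵥ ψ = c • ψ 1 + (-s) • ψ 0 := by
    simp [hvm, dotProduct, Fin.sum_univ_two, Complex.real_smul]
    ring
  have hψ10 : ‖ψ 1‖ ^ 2 + ‖ψ 0‖ ^ 2 = 1 := by linarith
  have h0p := norm_sq_add_norm_smul_add_smul_sq_le hψ01 hcs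
  have h0m := norm_sq_add_norm_smul_add_smul_sq_le hψ01 (p := -s) (q := c) (by linarith [neg_sq s])
  have h1p := norm_sq_add_norm_smul_add_smul_sq_le hψ10 (p := s) (q := c) (by linarith)
  have h1m := norm_sq_add_norm_smul_add_smul_sq_le hψ10 (p := c) (q := -s) (by linarith [neg_sq s])
  rw [add_comm ((-s) • ψ 0), abs_neg] at h0m
  rw [add_comm (s • ψ 1)] at h1p
  rw [hp, hm, max_add, add_max, add_max]
  refine max_le (max_le ?_ ?_) (max_le ?_ ?_) <;> linarith
end

section
/- Let ρ be a 2×2 complex positive semidefinite matrix with trace 1 (a qubit density matrix). Then (Re Tr[ρ(σz + σx)])² + (Re Tr[ρ(σz - σx)])² ≤ 2. -/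
open Matrix ComplexOrder

/-!
Writing `z = Re Tr[ρσz]` and `x = Re Tr[ρσx]`, the left-hand side is `(z + x)² + (z - x)² = 2(z² + x²)`,
so it suffices that the Bloch vector lies in the unit ball. With `ρ = !![a, b; b̄, d]` we have
`z = a - d` and `x = 2 Re b`, and positivity of `det ρ = ad - |b|²` gives
`z² + x² ≤ (a - d)² + 4|b|² ≤ (a - d)² + 4ad = (a + d)² = (Tr ρ)²`.
-/

open Complex

lemma trace_mul_σz (ρ : Matrix (Fin 2) (Fin 2) ℂ) : (ρ * σz).trace = ρ 0 0 - ρ 1 1 := by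
  simp [σz, trace_fin_two, mul_apply, Fin.sum_univ_two, sub_eq_add_neg]

lemma trace_mul_σx (ρ : Matrix (Fin 2) (Fin 2) ℂ) : (ρ * σx).trace = ρ 0 1 + ρ 1 0 := by
  simp [σx, trace_fin_two, mul_apply, Fin.sum_univ_two, add_comm]

namespace Matrix.PosSemidef

variable {ρ : Matrix (Fin 2) (Fin 2) ℂ}

lemma normSq_apply_zero_one_le (hρ : ρ.PosSemidef) :
    normSq (ρ 0 1) ≤ (ρ 0 0).re * (ρ 1 1).re := by
  have h10 : ρ 1 0 = star (ρ 0 1) := by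
    simpa using (congrFun (congrFun hρ.isHermitian 1) 0).symm
  have hdet := (le_def.mp hρ.det_nonneg).1
  have h00_im := (le_def.mp (hρ.diag_nonneg (i := 0))).2
  have h11_im := (le_def.mp (hρ.diag_nonneg (i := 1))).2
  simp only [det_fin_two, h10, sub_re, mul_re, star_def, conj_re, conj_im, zero_re] at hdet
  simp only [zero_im] at h00_im h11_im
  rw [normSq_apply]
  rw [← h00_im, ← h11_im] at hdet
  linarith

lemma sq_re_trace_mul_σz_add_sq_re_trace_mul_σx_le (hρ : ρ.PosSemidef) :
    (ρ * σz).trace.re ^ 2 + (ρ * σx).trace.re ^ 2 ≤ ρ.trace.re ^ 2 := by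
  have h10 : (ρ 1 0).re = (ρ 0 1).re := by
    simpa using congrArg re (congrFun (congrFun hρ.isHermitian 0) 1)
  have hb := hρ.normSq_apply_zero_one_le
  rw [normSq_apply] at hb
  rw [trace_mul_σz, trace_mul_σx, trace_fin_two]
  simp only [sub_re, add_re, h10]
  nlinarith [sq_nonneg (ρ 0 1).im]

end Matrix.PosSemidef

theorem stmt_4 (ρ : Matrix (Fin 2) (Fin 2) ℂ)
    (hρ : ρ.PosSemidef) (htr : ρ.trace = 1) :
    ((ρ * (σz + σx)).trace.re) ^ 2 + ((ρ * (σz - σx)).trace.re) ^ 2 ≤ 2 := by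
  have hbloch := hρ.sq_re_trace_mul_σz_add_sq_re_trace_mul_σx_le
  rw [htr, one_re, one_pow] at hbloch
  set z := (ρ * σz).trace.re
  set x := (ρ * σx).trace.re
  calc ((ρ * (σz + σx)).trace.re) ^ 2 + ((ρ * (σz - σx)).trace.re) ^ 2
      = (z + x) ^ 2 + (z - x) ^ 2 := by
        rw [Matrix.mul_add, Matrix.mul_sub, trace_add, trace_sub, add_re, sub_re]
    _ = 2 * (z ^ 2 + x ^ 2) := by ring
    _ ≤ 2 := by linarith
end

section
/- Let Λ be a finite type, let ξ : Λ → ℝ be nonnegative with ∑_λ ξ(λ) = 1, and let a, a', b, b' : Λ → ℝ take values in [-1, 1]. Define the correlation E(f, g) = ∑_λ ξ(λ) f(λ) g(λ). Then |E(a,b) - E(a,b') + E(a',b) + E(a',b')| ≤ 2. -/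
theorem stmt_5 {Λ : Type*} [Fintype Λ]
    (ξ : Λ → ℝ) (hξ : ∀ l, 0 ≤ ξ l) (hξ1 : ∑ l, ξ l = 1)
    (a a' b b' : Λ → ℝ)
    (ha : ∀ l, a l ∈ Set.Icc (-1 : ℝ) 1) (ha' : ∀ l, a' l ∈ Set.Icc (-1 : ℝ) 1)
    (hb : ∀ l, b l ∈ Set.Icc (-1 : ℝ) 1) (hb' : ∀ l, b' l ∈ Set.Icc (-1 : ℝ) 1)
    (E : (Λ → ℝ) → (Λ → ℝ) → ℝ) (hE : ∀ f g, E f g = ∑ l, ξ l * f l * g l) :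
    |E a b - E a b' + E a' b + E a' b'| ≤ 2 := by
  simp only [hE]
  have key : (∑ l, ξ l * a l * b l) - (∑ l, ξ l * a l * b' l) + (∑ l, ξ l * a' l * b l)
      + (∑ l, ξ l * a' l * b' l) = ∑ l, ξ l * (a l * b l - a l * b' l + a' l * b l + a' l * b' l) := by
    rw [← Finset.sum_sub_distrib, ← Finset.sum_add_distrib, ← Finset.sum_add_distrib]
    apply Finset.sum_congr rfl; intro l _; ring
  rw [key]
  calc |∑ l, ξ l * (a l * b l - a l * b' l + a' l * b l + a' l * b' l)|
      ≤ ∑ l, |ξ l * (a l * b l - a l * b' l + a' l * b l + a' l * b' l)| :=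
        Finset.abs_sum_le_sum_abs _ _
    _ ≤ ∑ l, ξ l * 2 := by
        apply Finset.sum_le_sum
        intro l _
        rw [abs_mul, abs_of_nonneg (hξ l)]
        apply mul_le_mul_of_nonneg_left _ (hξ l)
        rw [abs_le]
        obtain ⟨h1, h2⟩ := ha l
        obtain ⟨h3, h4⟩ := ha' l
        obtain ⟨h5, h6⟩ := hb l
        obtain ⟨h7, h8⟩ := hb' l
        constructor <;> nlinarith [mul_nonneg (by linarith : (0:ℝ) ≤ 1 - a l) (by linarith : (0:ℝ) ≤ 1 - b l), mul_nonneg (by linarith : (0:ℝ) ≤ 1 - a l) (by linarith : (0:ℝ) ≤ 1 + b l), mul_nonneg (by linarith : (0:ℝ) ≤ 1 + a l) (by linarith : (0:ℝ) ≤ 1 - b l), mul_nonneg (by linarith : (0:ℝ) ≤ 1 + a l) (by linarith : (0:ℝ) ≤ 1 + b l), mul_nonneg (by linarith : (0:ℝ) ≤ 1 - a l) (by linarith : (0:ℝ) ≤ 1 - b' l), mul_nonneg (by linarith : (0:ℝ) ≤ 1 - a l) (by linarith : (0:ℝ) ≤ 1 + b' l), mul_nonneg (by linarith : (0:ℝ)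 ≤ 1 + a l) (by linarith : (0:ℝ) ≤ 1 - b' l), mul_nonneg (by linarith : (0:ℝ) ≤ 1 + a l) (by linarith : (0:ℝ) ≤ 1 + b' l), mul_nonneg (by linarith : (0:ℝ) ≤ 1 - a' l) (by linarith : (0:ℝ) ≤ 1 - b l), mul_nonneg (by linarith : (0:ℝ) ≤ 1 - a' l) (by linarith : (0:ℝ) ≤ 1 + b l), mul_nonneg (by linarith : (0:ℝ) ≤ 1 + a' l) (by linarith : (0:ℝ) ≤ 1 - b l), mul_nonneg (by linarith : (0:ℝ) ≤ 1 + a' l) (by linarith : (0:ℝ) ≤ 1 + b l), mul_nonneg (by linarith : (0:ℝ) ≤ 1 - a' l) (by linarith : (0:ℝ) ≤ 1 - b' l), mul_nonneg (by linarith : (0:ℝ) ≤ 1 - a' l) (by linarith : (0:ℝ) ≤ 1 + b' l), mul_nonneg (by linarith : (0:ℝ) ≤ 1 + a' l) (by linarith : (0:ℝ) ≤ 1 - b' l), mul_nonneg (by linarith : (0:ℝ) ≤ 1 + a' l) (by linarith : (0:ℝ) ≤ 1 + b' l)]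
    _ = 2 := by rw [← Finset.sum_mul, hξ1, one_mul]
end

section
/- Let Λ be a finite type, let ξ : Λ → ℝ be nonnegative with ∑_λ ξ(λ) = 1, let a, a' : Λ → ℝ take values in [-1, 1], and let σ : Λ → (2×2 complex matrices) assign to each λ a positive semidefinite matrix of trace 1. Set Y = σz, Y' = σx, and define E₁ = ∑_λ ξ(λ) a(λ) Re Tr[σ(λ)(Y - Y')] and E₂ = ∑_λ ξ(λ) a'(λ) Re Tr[σ(λ)(Y + Y')]. Then E₁² + E₂² ≤ 2. -/
open Matrix ComplexOrder

lemma key_bound (M : Matrix (Fin 2) (Fin 2) ℂ) (hM : M.PosSemidef) (htr : M.trace = 1) :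
    ((M * (σz - σx)).trace.re) ^ 2 + ((M * (σz + σx)).trace.re) ^ 2 ≤ 2 := by
  have hherm := hM.1
  have h10 : M 1 0 = star (M 0 1) := by
    have := hherm.apply 1 0; simpa using this.symm
  have h00 : (M 0 0).im = 0 := by
    have := hherm.apply 0 0; exact Complex.conj_eq_iff_im.mp (by simpa using this)
  have h11 : (M 1 1).im = 0 := by
    have := hherm.apply 1 1; exact Complex.conj_eq_iff_im.mp (by simpa using this)
  have hdet2 : M.det = M 0 0 * M 1 1 - M 0 1 * M 1 0 := Matrix.det_fin_two M
  have hdet : (0:ℂ) ≤ M.det := by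
    rw [hherm.det_eq_prod_eigenvalues]
    refine Finset.prod_nonneg fun i _ => ?_
    simpa using Complex.zero_le_real.mpr (hM.eigenvalues_nonneg i)
  have hdetre : 0 ≤ (M.det).re := by
    rw [Complex.le_def] at hdet; simpa using hdet.1
  have hdre : (M.det).re = (M 0 0).re * (M 1 1).re - ((M 0 1).re ^ 2 + (M 0 1).im ^ 2) := by
    rw [hdet2, h10]
    simp [Complex.sub_re, Complex.mul_re, h00, h11, Complex.conj_re, Complex.conj_im]
    ring
  have htr' : (M 0 0).re + (M 1 1).re = 1 := by
    have : M.trace = M 0 0 + M 1 1 := by simp [Matrix.trace, Matrix.diag, Fin.sum_univ_two]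
    rw [this] at htr
    have := congrArg Complex.re htr
    simpa using this
  have e1 : (M * (σz - σx)).trace = M 0 0 - M 1 1 - M 0 1 - M 1 0 := by
    simp [σz, σx, Matrix.trace, Matrix.diag, Fin.sum_univ_two, Matrix.mul_apply]
    ring
  have e2 : (M * (σz + σx)).trace = M 0 0 - M 1 1 + M 0 1 + M 1 0 := by
    simp [σz, σx, Matrix.trace, Matrix.diag, Fin.sum_univ_two, Matrix.mul_apply]
    ring
  have hsq : ((M 0 0).re + (M 1 1).re) ^ 2 = 1 := by rw [htr']; norm_num
  have hpq : (M 0 1).re ^ 2 + (M 0 1).im ^ 2 ≤ (M 0 0).re * (M 1 1).re := by linarith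
  have hd : ((M 0 0).re - (M 1 1).re) ^ 2 = 1 - 4 * ((M 0 0).re * (M 1 1).re) := by
    linear_combination hsq
  rw [e1, e2, h10]
  simp [Complex.sub_re, Complex.add_re, h00, h11]
  nlinarith [sq_nonneg (M 0 1).im, hpq, hd]

theorem stmt_7 {Λ : Type*} [Fintype Λ]
    (ξ : Λ → ℝ) (hξ : ∀ l, 0 ≤ ξ l) (hξ1 : ∑ l, ξ l = 1)
    (a a' : Λ → ℝ)
    (ha : ∀ l, a l ∈ Set.Icc (-1 : ℝ) 1) (ha' : ∀ l, a' l ∈ Set.Icc (-1 : ℝ) 1)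
    (σ : Λ → Matrix (Fin 2) (Fin 2) ℂ)
    (hσ : ∀ l, (σ l).PosSemidef) (hσtr : ∀ l, (σ l).trace = 1)
    (E₁ E₂ : ℝ)
    (hE₁ : E₁ = ∑ l, ξ l * a l * ((σ l * (σz - σx)).trace.re))
    (hE₂ : E₂ = ∑ l, ξ l * a' l * ((σ l * (σz + σx)).trace.re)) :
    E₁ ^ 2 + E₂ ^ 2 ≤ 2 := by
  set u : Λ → ℝ := fun l => (σ l * (σz - σx)).trace.re with hu
  set v : Λ → ℝ := fun l => (σ l * (σz + σx)).trace.re with hv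
  have hkey : ∀ l, u l ^ 2 + v l ^ 2 ≤ 2 := fun l => key_bound (σ l) (hσ l) (hσtr l)
  -- |E₁| ≤ ∑ ξ |u|
  have habs1 : |E₁| ≤ ∑ l, ξ l * |u l| := by
    rw [hE₁]
    refine (Finset.abs_sum_le_sum_abs _ _).trans (Finset.sum_le_sum fun l _ => ?_)
    rw [abs_mul, abs_mul, abs_of_nonneg (hξ l)]
    show ξ l * |a l| * |u l| ≤ ξ l * |u l|
    nlinarith [abs_nonneg (u l), abs_le.mpr ⟨(ha l).1, (ha l).2⟩, abs_nonneg (a l), hξ l, mul_nonneg (hξ l) (abs_nonneg (u l))]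
  have habs2 : |E₂| ≤ ∑ l, ξ l * |v l| := by
    rw [hE₂]
    refine (Finset.abs_sum_le_sum_abs _ _).trans (Finset.sum_le_sum fun l _ => ?_)
    rw [abs_mul, abs_mul, abs_of_nonneg (hξ l)]
    show ξ l * |a' l| * |v l| ≤ ξ l * |v l|
    nlinarith [abs_nonneg (v l), abs_le.mpr ⟨(ha' l).1, (ha' l).2⟩, abs_nonneg (a' l), hξ l, mul_nonneg (hξ l) (abs_nonneg (v l))]
  -- Cauchy-Schwarz: (∑ ξ |u|)² ≤ (∑ ξ)(∑ ξ u²)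
  have hcs1 : (∑ l, ξ l * |u l|) ^ 2 ≤ ∑ l, ξ l * u l ^ 2 := by
    have := Finset.sum_mul_sq_le_sq_mul_sq Finset.univ (fun l => Real.sqrt (ξ l))
      (fun l => Real.sqrt (ξ l) * |u l|)
    calc (∑ l, ξ l * |u l|) ^ 2
        = (∑ l, Real.sqrt (ξ l) * (Real.sqrt (ξ l) * |u l|)) ^ 2 := by
          congr 1; apply Finset.sum_congr rfl; intro l _
          rw [← mul_assoc, Real.mul_self_sqrt (hξ l)]
      _ ≤ (∑ l, Real.sqrt (ξ l) ^ 2) * ∑ l, (Real.sqrt (ξ l) * |u l|) ^ 2 := this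
      _ = ∑ l, ξ l * u l ^ 2 := by
          rw [show (∑ l, Real.sqrt (ξ l) ^ 2) = 1 by
            rw [← hξ1]; exact Finset.sum_congr rfl fun l _ => Real.sq_sqrt (hξ l)]
          rw [one_mul]
          exact Finset.sum_congr rfl fun l _ => by
            rw [mul_pow, Real.sq_sqrt (hξ l), sq_abs]
  have hcs2 : (∑ l, ξ l * |v l|) ^ 2 ≤ ∑ l, ξ l * v l ^ 2 := by
    have := Finset.sum_mul_sq_le_sq_mul_sq Finset.univ (fun l => Real.sqrt (ξ l))
      (fun l => Real.sqrt (ξ l) * |v l|)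
    calc (∑ l, ξ l * |v l|) ^ 2
        = (∑ l, Real.sqrt (ξ l) * (Real.sqrt (ξ l) * |v l|)) ^ 2 := by
          congr 1; apply Finset.sum_congr rfl; intro l _
          rw [← mul_assoc, Real.mul_self_sqrt (hξ l)]
      _ ≤ (∑ l, Real.sqrt (ξ l) ^ 2) * ∑ l, (Real.sqrt (ξ l) * |v l|) ^ 2 := this
      _ = ∑ l, ξ l * v l ^ 2 := by
          rw [show (∑ l, Real.sqrt (ξ l) ^ 2) = 1 by
            rw [← hξ1]; exact Finset.sum_congr rfl fun l _ => Real.sq_sqrt (hξ l)]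
          rw [one_mul]
          exact Finset.sum_congr rfl fun l _ => by
            rw [mul_pow, Real.sq_sqrt (hξ l), sq_abs]
  have hsum : (∑ l, ξ l * u l ^ 2) + (∑ l, ξ l * v l ^ 2) ≤ 2 := by
    rw [← Finset.sum_add_distrib]
    calc (∑ l, (ξ l * u l ^ 2 + ξ l * v l ^ 2)) ≤ ∑ l, ξ l * 2 := by
          refine Finset.sum_le_sum fun l _ => ?_
          rw [← mul_add]
          exact mul_le_mul_of_nonneg_left (hkey l) (hξ l)
      _ = 2 := by rw [← Finset.sum_mul, hξ1, one_mul]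
  have h1 : E₁ ^ 2 ≤ ∑ l, ξ l * u l ^ 2 := by
    calc E₁ ^ 2 = |E₁| ^ 2 := (sq_abs _).symm
      _ ≤ (∑ l, ξ l * |u l|) ^ 2 := by
          apply pow_le_pow_left₀ (abs_nonneg _) habs1
      _ ≤ _ := hcs1
  have h2 : E₂ ^ 2 ≤ ∑ l, ξ l * v l ^ 2 := by
    calc E₂ ^ 2 = |E₂| ^ 2 := (sq_abs _).symm
      _ ≤ (∑ l, ξ l * |v l|) ^ 2 := by
          apply pow_le_pow_left₀ (abs_nonneg _) habs2
      _ ≤ _ := hcs2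
  linarith
end

section
/- Fix θ ∈ [0, π/2] and set Y = σz and Y' = cos θ · σz + sin θ · σx. Let Λ be a finite type, let ξ : Λ → ℝ be nonnegative with ∑_λ ξ(λ) = 1, let a, a' : Λ → ℝ take values in [-1, 1], and let σ₁, σ₂ : Λ → (2×2 complex matrices) be two assignments of positive semidefinite trace-1 matrices. Define E₁ = ∑_λ ξ(λ) a(λ) Re Tr[σ₁(λ)(Y - Y')] and E₂ = ∑_λ ξ(λ) a'(λ) Re Tr[σ₂(λ)(Y + Y')]. Then E₁² + E₂² ≤ 4. -/
open Matrix ComplexOrder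

/-!
For a qubit state ρ, `det ρ ≥ 0` and `Tr ρ = 1` put its Bloch vector in the unit disc, so by
Cauchy–Schwarz `(Re Tr[ρ (m σz + s σx)])² ≤ m² + s²`. Averaging over λ with weights ξ and
coefficients in [-1, 1] preserves such a bound on squares (Jensen). Since
`Y ∓ Y' = (1 ∓ cos θ) σz ∓ sin θ σx`, this gives `E₁² ≤ 2 - 2 cos θ` and `E₂² ≤ 2 + 2 cos θ`.
-/

theorem Matrix.PosSemidef.normSq_apply_zero_one_le_s8 {ρ : Matrix (Fin 2) (Fin 2) ℂ}
    (hρ : ρ.PosSemidef) : Complex.normSq (ρ 0 1) ≤ (ρ 0 0).re * (ρ 1 1).re := by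
  have hdet := (Complex.le_def.mp hρ.det_nonneg).1
  have h10 : ρ 1 0 = star (ρ 0 1) := (hρ.isHermitian.apply 1 0).symm
  have h00 := (Complex.le_def.mp (hρ.diag_nonneg (i := 0))).2
  have h11 := (Complex.le_def.mp (hρ.diag_nonneg (i := 1))).2
  simp only [det_fin_two, h10, Complex.sub_re, Complex.mul_re, Complex.star_def,
    Complex.conj_re, Complex.conj_im, Complex.zero_re, Complex.zero_im] at hdet h00 h11
  rw [← h00, ← h11] at hdet
  rw [Complex.normSq_apply]
  linarith

theorem re_trace_mul_pauli_sq_le {ρ : Matrix (Fin 2) (Fin 2) ℂ} (hρ : ρ.PosSemidef)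
    (htr : ρ.trace = 1) (m s : ℝ) :
    (ρ * ((m : ℂ) • σz + (s : ℂ) • σx)).trace.re ^ 2 ≤ m ^ 2 + s ^ 2 := by
  have h10 : ρ 1 0 = star (ρ 0 1) := (hρ.isHermitian.apply 1 0).symm
  have hsum : (ρ 0 0).re + (ρ 1 1).re = 1 := by
    simpa [trace_fin_two] using congrArg Complex.re htr
  have hoff := hρ.normSq_apply_zero_one_le_s8
  have hexp : (ρ * ((m : ℂ) • σz + (s : ℂ) • σx)).trace.re
      = m * ((ρ 0 0).re - (ρ 1 1).re) + s * (2 * (ρ 0 1).re) := by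
    simp only [σz, σx, smul_of, smul_cons, smul_eq_mul, mul_one, mul_zero, smul_empty, mul_neg,
      of_add_of, add_cons, head_cons, add_zero, tail_cons, zero_add, empty_add_empty,
      trace_fin_two, mul_apply, of_apply, cons_val', cons_val_zero, cons_val_fin_one,
      Fin.sum_univ_two, cons_val_one, h10, RCLike.star_def, Complex.add_re, Complex.mul_re,
      Complex.ofReal_re, Complex.ofReal_im, sub_zero, Complex.conj_re, Complex.conj_im,
      Complex.neg_re]
    ring
  have hbloch : ((ρ 0 0).re - (ρ 1 1).re) ^ 2 + (2 * (ρ 0 1).re) ^ 2 ≤ 1 := by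
    rw [Complex.normSq_apply] at hoff
    nlinarith [sq_nonneg (ρ 0 1).im]
  rw [hexp]
  nlinarith [sq_nonneg (m * (2 * (ρ 0 1).re) - s * ((ρ 0 0).re - (ρ 1 1).re)),
    sq_nonneg m, sq_nonneg s]

theorem sq_sum_mul_mul_le {ι : Type*} (t : Finset ι) {w a f : ι → ℝ} {C : ℝ}
    (hw : ∀ i ∈ t, 0 ≤ w i) (hw1 : ∑ i ∈ t, w i = 1) (ha : ∀ i ∈ t, |a i| ≤ 1)
    (hf : ∀ i ∈ t, f i ^ 2 ≤ C) :
    (∑ i ∈ t, w i * a i * f i) ^ 2 ≤ C := by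
  have hjensen := (even_two.convexOn_pow (𝕜 := ℝ)).map_sum_le hw hw1
    (p := fun i => a i * f i) (fun i _ => Set.mem_univ _)
  calc (∑ i ∈ t, w i * a i * f i) ^ 2 ≤ ∑ i ∈ t, w i * (a i * f i) ^ 2 := by
        simpa only [smul_eq_mul, mul_assoc] using hjensen
    _ ≤ ∑ i ∈ t, w i * C := by
        refine Finset.sum_le_sum fun i hi => mul_le_mul_of_nonneg_left ?_ (hw i hi)
        rw [mul_pow]
        have ha2 : a i ^ 2 ≤ 1 := (sq_le_one_iff_abs_le_one _).mpr (ha i hi)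
        exact (mul_le_of_le_one_left (sq_nonneg _) ha2).trans (hf i hi)
    _ = C := by rw [← Finset.sum_mul, hw1, one_mul]

theorem stmt_8_general (θ : ℝ)
    (Y Y' : Matrix (Fin 2) (Fin 2) ℂ)
    (hY : Y = σz) (hY' : Y' = (Real.cos θ : ℂ) • σz + (Real.sin θ : ℂ) • σx)
    {Λ : Type*} [Fintype Λ]
    (ξ : Λ → ℝ) (hξ : ∀ l, 0 ≤ ξ l) (hξ1 : ∑ l, ξ l = 1)
    (a a' : Λ → ℝ)
    (ha : ∀ l, a l ∈ Set.Icc (-1 : ℝ) 1) (ha' : ∀ l, a' l ∈ Set.Icc (-1 : ℝ) 1)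
    (σ₁ σ₂ : Λ → Matrix (Fin 2) (Fin 2) ℂ)
    (hσ₁ : ∀ l, (σ₁ l).PosSemidef) (hσ₁tr : ∀ l, (σ₁ l).trace = 1)
    (hσ₂ : ∀ l, (σ₂ l).PosSemidef) (hσ₂tr : ∀ l, (σ₂ l).trace = 1)
    (E₁ E₂ : ℝ)
    (hE₁ : E₁ = ∑ l, ξ l * a l * ((σ₁ l * (Y - Y')).trace.re))
    (hE₂ : E₂ = ∑ l, ξ l * a' l * ((σ₂ l * (Y + Y')).trace.re)) :
    E₁ ^ 2 + E₂ ^ 2 ≤ 4 := by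
  have hdiff : Y - Y' = ((1 - Real.cos θ : ℝ) : ℂ) • σz + ((-Real.sin θ : ℝ) : ℂ) • σx := by
    rw [hY, hY']; push_cast; module
  have hadd : Y + Y' = ((1 + Real.cos θ : ℝ) : ℂ) • σz + ((Real.sin θ : ℝ) : ℂ) • σx := by
    rw [hY, hY']; push_cast; module
  have hE₁sq : E₁ ^ 2 ≤ (1 - Real.cos θ) ^ 2 + (-Real.sin θ) ^ 2 := by
    rw [hE₁, hdiff]
    exact sq_sum_mul_mul_le _ (fun l _ => hξ l) hξ1 (fun l _ => abs_le.mpr (ha l))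
      fun l _ => re_trace_mul_pauli_sq_le (hσ₁ l) (hσ₁tr l) _ _
  have hE₂sq : E₂ ^ 2 ≤ (1 + Real.cos θ) ^ 2 + (Real.sin θ) ^ 2 := by
    rw [hE₂, hadd]
    exact sq_sum_mul_mul_le _ (fun l _ => hξ l) hξ1 (fun l _ => abs_le.mpr (ha' l))
      fun l _ => re_trace_mul_pauli_sq_le (hσ₂ l) (hσ₂tr l) _ _
  nlinarith [Real.sin_sq_add_cos_sq θ]

theorem stmt_8 (θ : ℝ) (hθ : θ ∈ Set.Icc 0 (Real.pi / 2))
    (Y Y' : Matrix (Fin 2) (Fin 2) ℂ)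
    (hY : Y = σz) (hY' : Y' = (Real.cos θ : ℂ) • σz + (Real.sin θ : ℂ) • σx)
    {Λ : Type*} [Fintype Λ]
    (ξ : Λ → ℝ) (hξ : ∀ l, 0 ≤ ξ l) (hξ1 : ∑ l, ξ l = 1)
    (a a' : Λ → ℝ)
    (ha : ∀ l, a l ∈ Set.Icc (-1 : ℝ) 1) (ha' : ∀ l, a' l ∈ Set.Icc (-1 : ℝ) 1)
    (σ₁ σ₂ : Λ → Matrix (Fin 2) (Fin 2) ℂ)
    (hσ₁ : ∀ l, (σ₁ l).PosSemidef) (hσ₁tr : ∀ l, (σ₁ l).trace = 1)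
    (hσ₂ : ∀ l, (σ₂ l).PosSemidef) (hσ₂tr : ∀ l, (σ₂ l).trace = 1)
    (E₁ E₂ : ℝ)
    (hE₁ : E₁ = ∑ l, ξ l * a l * ((σ₁ l * (Y - Y')).trace.re))
    (hE₂ : E₂ = ∑ l, ξ l * a' l * ((σ₂ l * (Y + Y')).trace.re)) :
    E₁ ^ 2 + E₂ ^ 2 ≤ 4 :=
  stmt_8_general θ Y Y' hY hY' ξ hξ hξ1 a a' ha ha' σ₁ σ₂ hσ₁ hσ₁tr hσ₂ hσ₂tr E₁ E₂ hE₁ hE₂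
end

section
/- Let X, X', Y, Y' be n×n complex matrices with X² = I, X'² = I, Y² = I, Y'² = I, and let S = X ⊗ Y - X ⊗ Y' + X' ⊗ Y + X' ⊗ Y' (Kronecker products). Then S² = 4 (I ⊗ I) + [X, X'] ⊗ [Y, Y'], where [A, B] = AB - BA. -/
open Matrix Kronecker

lemma my_sub_kronecker {n : ℕ} (A B C : Matrix (Fin n) (Fin n) ℂ) :
    (A - B) ⊗ₖ C = A ⊗ₖ C - B ⊗ₖ C := by
  ext ⟨i, i'⟩ ⟨j, j'⟩
  simp [Matrix.kronecker_apply, sub_mul]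

lemma my_kronecker_sub {n : ℕ} (A B C : Matrix (Fin n) (Fin n) ℂ) :
    A ⊗ₖ (B - C) = A ⊗ₖ B - A ⊗ₖ C := by
  ext ⟨i, i'⟩ ⟨j, j'⟩
  simp [Matrix.kronecker_apply, mul_sub]

theorem stmt_9 {n : ℕ} (X X' Y Y' : Matrix (Fin n) (Fin n) ℂ)
    (hX : X ^ 2 = 1) (hX' : X' ^ 2 = 1) (hY : Y ^ 2 = 1) (hY' : Y' ^ 2 = 1)
    (S : Matrix (Fin n × Fin n) (Fin n × Fin n) ℂ)
    (hS : S = X ⊗ₖ Y - X ⊗ₖ Y' + X' ⊗ₖ Y + X' ⊗ₖ Y') :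
    S ^ 2 = (4 : ℂ) • ((1 : Matrix (Fin n) (Fin n) ℂ) ⊗ₖ (1 : Matrix (Fin n) (Fin n) ℂ)) +
      (X * X' - X' * X) ⊗ₖ (Y * Y' - Y' * Y) := by
  subst hS
  rw [pow_two] at hX hX' hY hY'
  rw [pow_two]
  simp only [add_mul, mul_add, sub_mul, mul_sub, ← Matrix.mul_kronecker_mul, hX, hX', hY, hY',
    Matrix.one_kronecker_one, my_sub_kronecker, my_kronecker_sub]
  module
end

section
/- Let X, X', Y, Y' be 2×2 complex matrices with X² = I, X'² = I, Y² = I, Y'² = I, and suppose XX' + X'X = 0 and YY' + Y'Y = 0 (each pair anticommutes). Let S = X ⊗ Y - X ⊗ Y' + X' ⊗ Y + X' ⊗ Y' (Kronecker products). Then S³ = 8 S. -/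
open Matrix Kronecker

lemma neg_kronecker' {l m n p : Type*} (A : Matrix l m ℂ) (B : Matrix n p ℂ) :
    (-A) ⊗ₖ B = -(A ⊗ₖ B) := by
  ext ⟨i, j⟩ ⟨k, s⟩
  simp [Matrix.kroneckerMap_apply]

lemma kronecker_neg' {l m n p : Type*} (A : Matrix l m ℂ) (B : Matrix n p ℂ) :
    A ⊗ₖ (-B) = -(A ⊗ₖ B) := by
  ext ⟨i, j⟩ ⟨k, s⟩
  simp [Matrix.kroneckerMap_apply]

theorem stmt_10 (X X' Y Y' : Matrix (Fin 2) (Fin 2) ℂ)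
    (hX : X ^ 2 = 1) (hX' : X' ^ 2 = 1) (hY : Y ^ 2 = 1) (hY' : Y' ^ 2 = 1)
    (hXX' : X * X' + X' * X = 0) (hYY' : Y * Y' + Y' * Y = 0)
    (S : Matrix (Fin 2 × Fin 2) (Fin 2 × Fin 2) ℂ)
    (hS : S = X ⊗ₖ Y - X ⊗ₖ Y' + X' ⊗ₖ Y + X' ⊗ₖ Y') :
    S ^ 3 = (8 : ℂ) • S := by
  subst hS
  have hx : X * X = 1 := by rw [← sq]; exact hX
  have hx' : X' * X' = 1 := by rw [← sq]; exact hX'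
  have hy : Y * Y = 1 := by rw [← sq]; exact hY
  have hy' : Y' * Y' = 1 := by rw [← sq]; exact hY'
  have ax : ∀ M : Matrix (Fin 2) (Fin 2) ℂ, X' * (X * M) = -(X * (X' * M)) := by
    intro M
    rw [← Matrix.mul_assoc, ← Matrix.mul_assoc, eq_neg_of_add_eq_zero_right hXX', neg_mul]
  have ay : ∀ M : Matrix (Fin 2) (Fin 2) ℂ, Y' * (Y * M) = -(Y * (Y' * M)) := by
    intro M
    rw [← Matrix.mul_assoc, ← Matrix.mul_assoc, eq_neg_of_add_eq_zero_right hYY', neg_mul]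
  have ax2 : X' * X = -(X * X') := eq_neg_of_add_eq_zero_right hXX'
  have ay2 : Y' * Y = -(Y * Y') := eq_neg_of_add_eq_zero_right hYY'
  have hxm : ∀ M : Matrix (Fin 2) (Fin 2) ℂ, X * (X * M) = M := by
    intro M; rw [← Matrix.mul_assoc, hx, Matrix.one_mul]
  have hxm' : ∀ M : Matrix (Fin 2) (Fin 2) ℂ, X' * (X' * M) = M := by
    intro M; rw [← Matrix.mul_assoc, hx', Matrix.one_mul]
  have hym : ∀ M : Matrix (Fin 2) (Fin 2) ℂ, Y * (Y * M) = M := by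
    intro M; rw [← Matrix.mul_assoc, hy, Matrix.one_mul]
  have hym' : ∀ M : Matrix (Fin 2) (Fin 2) ℂ, Y' * (Y' * M) = M := by
    intro M; rw [← Matrix.mul_assoc, hy', Matrix.one_mul]
  rw [pow_succ, pow_succ, pow_one]
  simp only [Matrix.add_mul, Matrix.mul_add, Matrix.sub_mul, Matrix.mul_sub,
    ← Matrix.mul_kronecker_mul, Matrix.mul_assoc, ax, ay, ax2, ay2, hxm, hxm', hym, hym',
    hx, hx', hy, hy', Matrix.mul_one, Matrix.one_mul, mul_neg, neg_mul, neg_neg,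
    neg_kronecker', kronecker_neg']
  module
end

section
/- Let X, X', Y, Y' be Hermitian 2×2 complex matrices with X² = I, X'² = I, Y² = I, Y'² = I, let S = X ⊗ Y - X ⊗ Y' + X' ⊗ Y + X' ⊗ Y' (Kronecker products), and let ρ be any 4×4 complex positive semidefinite matrix with trace 1. Then |Re Tr[ρ S]| ≤ 2√2. -/
/-!
For self-adjoint involutions `a, a'` commuting with self-adjoint involutions `b, b'`, and
`t = √2`, the CHSH operator `S = ab - ab' + a'b + a'b'` satisfies the sum-of-squares identity
`(t a - (b - b'))² + (t a' - (b + b'))² = 2t (2t - S)`, so `S ≤ 2√2` in any star-ordered algebra;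
replacing `a, a'` by `-a, -a'` gives `-2√2 ≤ S`. For matrices, `X ⊗ 1` and `1 ⊗ Y` commute, and a
density matrix `ρ` turns the operator bounds into bounds on `Tr(ρ S)` because `Tr(ρ M) ≥ 0` for
positive semidefinite `M`.
-/

open Matrix Kronecker ComplexOrder

theorem chsh_sum_of_squares {R A : Type*} [CommRing R] [Ring A] [Algebra R A] {t : R}
    (ht : t * t = 2) {a a' b b' : A} (ha : a ^ 2 = 1) (ha' : a' ^ 2 = 1) (hb : b ^ 2 = 1)
    (hb' : b' ^ 2 = 1) (hab : Commute a b) (hab' : Commute a b') (ha'b : Commute a' b)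
    (ha'b' : Commute a' b') :
    (t • a - (b - b')) ^ 2 + (t • a' - (b + b')) ^ 2 =
      (2 * t) • ((2 * t) • 1 - (a * b - a * b' + a' * b + a' * b')) := by
  simp only [sq] at ha ha' hb hb' ⊢
  simp only [sub_mul, mul_sub, add_mul, mul_add, smul_mul_assoc, mul_smul_comm, smul_sub,
    smul_add, smul_smul]
  rw [ha, ha', hb, hb', hab.eq, hab'.eq, ha'b.eq, ha'b'.eq]
  linear_combination (norm := module) (-2 : R) • ht • (1 : A)

section StarOrderedRing

variable {A : Type*} [Ring A] [StarRing A] [PartialOrder A] [StarOrderedRing A] [Algebra ℝ A]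
  [StarModule ℝ A] {a a' b b' : A}

theorem chsh_le_two_sqrt_two (ha : IsSelfAdjoint a) (ha' : IsSelfAdjoint a')
    (hb : IsSelfAdjoint b) (hb' : IsSelfAdjoint b') (ha2 : a ^ 2 = 1) (ha'2 : a' ^ 2 = 1)
    (hb2 : b ^ 2 = 1) (hb'2 : b' ^ 2 = 1) (hab : Commute a b) (hab' : Commute a b')
    (ha'b : Commute a' b) (ha'b' : Commute a' b') :
    a * b - a * b' + a' * b + a' * b' ≤ (2 * √2) • 1 := by
  have hsos := chsh_sum_of_squares (Real.mul_self_sqrt zero_le_two) ha2 ha'2 hb2 hb'2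
    hab hab' ha'b ha'b'
  have hP : IsSelfAdjoint (√2 • a - (b - b')) :=
    ((IsSelfAdjoint.all _).smul ha).sub (hb.sub hb')
  have hQ : IsSelfAdjoint (√2 • a' - (b + b')) :=
    ((IsSelfAdjoint.all _).smul ha').sub (hb.add hb')
  have hpos : 0 ≤ (2 * √2) • ((2 * √2) • (1 : A) - (a * b - a * b' + a' * b + a' * b')) :=
    hsos ▸ add_nonneg hP.sq_nonneg hQ.sq_nonneg
  exact sub_nonneg.mp ((smul_nonneg_iff_nonneg_of_pos_left (by positivity)).mp hpos)

theorem chsh_mem_Icc (ha : IsSelfAdjoint a) (ha' : IsSelfAdjoint a')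
    (hb : IsSelfAdjoint b) (hb' : IsSelfAdjoint b') (ha2 : a ^ 2 = 1) (ha'2 : a' ^ 2 = 1)
    (hb2 : b ^ 2 = 1) (hb'2 : b' ^ 2 = 1) (hab : Commute a b) (hab' : Commute a b')
    (ha'b : Commute a' b) (ha'b' : Commute a' b') :
    a * b - a * b' + a' * b + a' * b' ∈ Set.Icc (-((2 * √2) • 1)) ((2 * √2) • 1) := by
  refine ⟨?_, chsh_le_two_sqrt_two ha ha' hb hb' ha2 ha'2 hb2 hb'2 hab hab' ha'b ha'b'⟩
  have h := chsh_le_two_sqrt_two ha.neg ha'.neg hb hb' (by rwa [neg_sq]) (by rwa [neg_sq])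
    hb2 hb'2 hab.neg_left hab'.neg_left ha'b.neg_left ha'b'.neg_left
  rw [neg_le]
  convert h using 1
  noncomm_ring

end StarOrderedRing

open scoped MatrixOrder

namespace Matrix

section Kronecker

variable {m n α : Type*} [CommRing α]

theorem IsHermitian.kronecker [StarRing α] {A : Matrix m m α} {B : Matrix n n α}
    (hA : A.IsHermitian) (hB : B.IsHermitian) : (A ⊗ₖ B).IsHermitian := by
  rw [IsHermitian, conjTranspose_kronecker, hA.eq, hB.eq]

variable [Fintype m] [Fintype n] [DecidableEq m] [DecidableEq n]

theorem kronecker_sq (A : Matrix m m α) (B : Matrix n n α) :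
    (A ⊗ₖ B) ^ 2 = (A ^ 2) ⊗ₖ (B ^ 2) := by
  simp only [sq, mul_kronecker_mul]

theorem kronecker_one_mul_one_kronecker (A : Matrix m m α) (B : Matrix n n α) :
    (A ⊗ₖ 1) * (1 ⊗ₖ B) = A ⊗ₖ B := by
  rw [← mul_kronecker_mul, mul_one, one_mul]

theorem commute_kronecker_one_one_kronecker (A : Matrix m m α) (B : Matrix n n α) :
    Commute (A ⊗ₖ 1) (1 ⊗ₖ B) := by
  rw [Commute, SemiconjBy, kronecker_one_mul_one_kronecker, ← mul_kronecker_mul, mul_one,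
    one_mul]

end Kronecker

variable {m n 𝕜 : Type*} [Fintype m] [Fintype n] [DecidableEq m] [DecidableEq n] [RCLike 𝕜]

theorem kronecker_chsh_mem_Icc {X X' : Matrix m m 𝕜} {Y Y' : Matrix n n 𝕜}
    (hX : X.IsHermitian) (hX' : X'.IsHermitian) (hY : Y.IsHermitian) (hY' : Y'.IsHermitian)
    (hX2 : X ^ 2 = 1) (hX'2 : X' ^ 2 = 1) (hY2 : Y ^ 2 = 1) (hY'2 : Y' ^ 2 = 1) :
    X ⊗ₖ Y - X ⊗ₖ Y' + X' ⊗ₖ Y + X' ⊗ₖ Y' ∈ Set.Icc (-((2 * √2) • 1)) ((2 * √2) • 1) := by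
  have hermitian_left {Z : Matrix m m 𝕜} (hZ : Z.IsHermitian) :
      (Z ⊗ₖ (1 : Matrix n n 𝕜)).IsHermitian :=
    hZ.kronecker isHermitian_one
  have hermitian_right {Z : Matrix n n 𝕜} (hZ : Z.IsHermitian) :
      ((1 : Matrix m m 𝕜) ⊗ₖ Z).IsHermitian :=
    isHermitian_one.kronecker hZ
  have sq_left {Z : Matrix m m 𝕜} (hZ : Z ^ 2 = 1) : (Z ⊗ₖ (1 : Matrix n n 𝕜)) ^ 2 = 1 := by
    rw [kronecker_sq, hZ, one_pow, one_kronecker_one]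
  have sq_right {Z : Matrix n n 𝕜} (hZ : Z ^ 2 = 1) : ((1 : Matrix m m 𝕜) ⊗ₖ Z) ^ 2 = 1 := by
    rw [kronecker_sq, hZ, one_pow, one_kronecker_one]
  have comm := commute_kronecker_one_one_kronecker (α := 𝕜) (m := m) (n := n)
  rw [← kronecker_one_mul_one_kronecker X Y, ← kronecker_one_mul_one_kronecker X Y',
    ← kronecker_one_mul_one_kronecker X' Y, ← kronecker_one_mul_one_kronecker X' Y']
  exact chsh_mem_Icc (hermitian_left hX) (hermitian_left hX') (hermitian_right hY)
    (hermitian_right hY') (sq_left hX2) (sq_left hX'2) (sq_right hY2) (sq_right hY'2)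
    (comm _ _) (comm _ _) (comm _ _) (comm _ _)

theorem trace_mul_nonneg {ρ M : Matrix n n 𝕜} (hρ : 0 ≤ ρ) (hM : 0 ≤ M) :
    0 ≤ (ρ * M).trace := by
  obtain ⟨C, rfl⟩ := CStarAlgebra.nonneg_iff_eq_star_mul_self.mp hM
  rw [← mul_assoc, trace_mul_cycle]
  exact (star_right_conjugate_nonneg hρ C).posSemidef.trace_nonneg

theorem abs_re_trace_mul_le {ρ S : Matrix n n 𝕜} {c : ℝ} (hρ : 0 ≤ ρ) (htr : ρ.trace = 1)
    (hS : S ∈ Set.Icc (-(c • 1)) (c • 1)) : |RCLike.re (ρ * S).trace| ≤ c := by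
  have upper := (RCLike.nonneg_iff.mp (trace_mul_nonneg hρ (sub_nonneg.mpr hS.2))).1
  have lower := (RCLike.nonneg_iff.mp (trace_mul_nonneg hρ (neg_le_iff_add_nonneg.mp hS.1))).1
  simp only [mul_sub, mul_add, trace_sub, trace_add, mul_smul_comm, mul_one, trace_smul, htr,
    map_sub, map_add, RCLike.smul_re, RCLike.one_re] at upper lower
  exact abs_le.mpr ⟨by linarith, by linarith⟩

end Matrix

theorem stmt_13 (X X' Y Y' : Matrix (Fin 2) (Fin 2) ℂ)
    (hXh : X.IsHermitian) (hX'h : X'.IsHermitian)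
    (hYh : Y.IsHermitian) (hY'h : Y'.IsHermitian)
    (hX : X ^ 2 = 1) (hX' : X' ^ 2 = 1) (hY : Y ^ 2 = 1) (hY' : Y' ^ 2 = 1)
    (S : Matrix (Fin 2 × Fin 2) (Fin 2 × Fin 2) ℂ)
    (hS : S = X ⊗ₖ Y - X ⊗ₖ Y' + X' ⊗ₖ Y + X' ⊗ₖ Y')
    (ρ : Matrix (Fin 2 × Fin 2) (Fin 2 × Fin 2) ℂ)
    (hρ : ρ.PosSemidef) (htr : ρ.trace = 1) :
    |((ρ * S).trace).re| ≤ 2 * Real.sqrt 2 := by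
  subst hS
  exact abs_re_trace_mul_le hρ.nonneg htr (kronecker_chsh_mem_Icc hXh hX'h hYh hY'h hX hX' hY hY')
end

section
/- For θ ∈ ℝ, set X = σz, X' = σx, Y = sin θ · σx + cos θ · σz, Y' = cos θ · σx - sin θ · σz, and S(θ) = X ⊗ Y - X ⊗ Y' + X' ⊗ Y + X' ⊗ Y' (Kronecker products). Let ψ = (0, 1/√2, -1/√2, 0) ∈ ℂ⁴ be the spin singlet state, and let s(θ) = ⟨ψ, S(θ) ψ⟩. Then there exists θ (for instance θ = 0) such that |s(θ)³ - 8 s(θ)| > 16√3/9; indeed at θ = 0 one has |s³ - 8s| = 8. -/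
open Matrix Kronecker

/-- The CHSH operator S(θ) built from X = σz, X' = σx,
Y = sin θ·σx + cos θ·σz, Y' = cos θ·σx - sin θ·σz. -/
noncomputable def S (θ : ℝ) : Matrix (Fin 2 × Fin 2) (Fin 2 × Fin 2) ℂ :=
  σz ⊗ₖ ((Real.sin θ : ℂ) • σx + (Real.cos θ : ℂ) • σz)
    - σz ⊗ₖ ((Real.cos θ : ℂ) • σx - (Real.sin θ : ℂ) • σz)
    + σx ⊗ₖ ((Real.sin θ : ℂ) • σx + (Real.cos θ : ℂ) • σz)
    + σx ⊗ₖ ((Real.cos θ : ℂ) • σx - (Real.sin θ : ℂ) • σz)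

/-- The spin singlet state (0, 1/√2, -1/√2, 0) ∈ ℂ⁴ = ℂ² ⊗ ℂ². -/
noncomputable def ψ : Fin 2 × Fin 2 → ℂ := fun p =>
  if p = ((0 : Fin 2), (1 : Fin 2)) then ((Real.sqrt 2)⁻¹ : ℝ)
  else if p = ((1 : Fin 2), (0 : Fin 2)) then (-(Real.sqrt 2)⁻¹ : ℝ)
  else 0

/-- The singlet-state expectation value s(θ) = ⟨ψ, S(θ) ψ⟩ (a real number). -/
noncomputable def s (θ : ℝ) : ℝ := (star ψ ⬝ᵥ (S θ *ᵥ ψ)).re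


lemma s0 : s 0 = -2 := by
  have h00 : ψ (0, 0) = 0 := by norm_num [ψ, Prod.ext_iff]
  have h11 : ψ (1, 1) = 0 := by norm_num [ψ, Prod.ext_iff]
  have h01 : ψ (0, 1) = ((Real.sqrt 2)⁻¹ : ℝ) := by norm_num [ψ, Prod.ext_iff]
  have h10 : ψ (1, 0) = (-(Real.sqrt 2)⁻¹ : ℝ) := by norm_num [ψ, Prod.ext_iff]
  have h2 : ((Real.sqrt 2 : ℝ))⁻¹ * ((Real.sqrt 2 : ℝ))⁻¹ = 2⁻¹ := by
    rw [← mul_inv, Real.mul_self_sqrt (by norm_num : (0:ℝ) ≤ 2)]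
  simp only [s, S, σx, σz, Real.sin_zero, Real.cos_zero, dotProduct, mulVec,
    Fintype.sum_prod_type, Fin.sum_univ_two, Complex.ofReal_zero, Complex.ofReal_one,
    Pi.star_apply, Prod.mk_zero_zero, Prod.mk_one_one] at *
  norm_num [kroneckerMap_apply, Matrix.smul_apply, h00, h11, h01, h10]
  ring_nf
  rw [Complex.ofReal_inv] at *
  nlinarith [Real.sq_sqrt (by norm_num : (0:ℝ) ≤ 2), Real.sqrt_nonneg 2]

theorem stmt_15 :
    (∃ θ : ℝ, |s θ ^ 3 - 8 * s θ| > 16 * Real.sqrt 3 / 9) ∧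
    |s 0 ^ 3 - 8 * s 0| = 8 := by
  have h : |s 0 ^ 3 - 8 * s 0| = 8 := by
    rw [s0]; norm_num
  refine ⟨⟨0, ?_⟩, h⟩
  rw [h]
  have h3 : Real.sqrt 3 < 2 := by
    rw [show (2:ℝ) = Real.sqrt 4 by rw [show (4:ℝ) = 2^2 by norm_num, Real.sqrt_sq] <;> norm_num]
    exact Real.sqrt_lt_sqrt (by norm_num) (by norm_num)
  linarith
end

section
/- For θ ∈ ℝ, set X = σz, X' = σx, Y = sin θ · σx + cos θ · σz, Y' = cos θ · σx - sin θ · σz, and S(θ) = X ⊗ Y - X ⊗ Y' + X' ⊗ Y + X' ⊗ Y' (Kronecker products). Let ψ = (0, 1/√2, -1/√2, 0) ∈ ℂ⁴ be the spin singlet state and s = ⟨ψ, S(θ) ψ⟩. Then the third order cumulant satisfies ⟨ψ, S(θ)³ ψ⟩ - 3 ⟨ψ, S(θ)² ψ⟩ · s + 2 s³ = 2s³ - 16s. -/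
open Matrix Kronecker

lemma key_sq (θ : ℝ) : S θ *ᵥ (S θ *ᵥ ψ) = (8:ℂ) • ψ := by
  have h : Complex.sin θ ^ 2 + Complex.cos θ ^ 2 = 1 := Complex.sin_sq_add_cos_sq θ
  funext p
  obtain ⟨i,j⟩ := p
  fin_cases i <;> fin_cases j <;>
    simp [S, σx, σz, ψ, mulVec, dotProduct, Fintype.sum_prod_type, Fin.sum_univ_two,
      kroneckerMap_apply, Prod.ext_iff, -Complex.ofReal_sin, -Complex.ofReal_cos, -Prod.mk_zero_zero, -Prod.mk_one_one] <;>
    first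
    | linear_combination (norm := (push_cast; ring1)) (8 * (((Real.sqrt 2:ℝ):ℂ))⁻¹) * h
    | linear_combination (norm := (push_cast; ring1)) (-8 * (((Real.sqrt 2:ℝ):ℂ))⁻¹) * h
    | linear_combination (norm := (push_cast; ring1)) (16 * (((Real.sqrt 2:ℝ):ℂ))⁻¹) * h
    | linear_combination (norm := (push_cast; ring1)) (-16 * (((Real.sqrt 2:ℝ):ℂ))⁻¹) * h
    | ring1

lemma psi_norm : star ψ ⬝ᵥ ψ = 1 := by
  have ha : ((Real.sqrt 2)⁻¹ : ℝ) ^ 2 = 1/2 := by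
    rw [← Real.sqrt_inv, Real.sq_sqrt] <;> norm_num
  have hb : ((Real.sqrt 2:ℝ):ℂ) ^ 2 = 2 := by
    exact_mod_cast Real.sq_sqrt (by norm_num : (0:ℝ) ≤ 2)
  have ha' : (((Real.sqrt 2:ℝ)):ℂ)⁻¹ ^ 2 = 1/2 := by rw [inv_pow, hb]; norm_num
  simp [ψ, dotProduct, Fintype.sum_prod_type, Fin.sum_univ_two]
  linear_combination 2 * ha'

theorem stmt_16 (θ : ℝ) (s : ℝ) (hs : s = (star ψ ⬝ᵥ (S θ *ᵥ ψ)).re) :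
    (star ψ ⬝ᵥ ((S θ ^ 3) *ᵥ ψ)).re - 3 * (star ψ ⬝ᵥ ((S θ ^ 2) *ᵥ ψ)).re * s + 2 * s ^ 3 =
      2 * s ^ 3 - 16 * s := by
  have e2 : (S θ ^ 2) *ᵥ ψ = (8:ℂ) • ψ := by
    rw [pow_two, ← Matrix.mulVec_mulVec, key_sq]
  have e3 : (S θ ^ 3) *ᵥ ψ = (8:ℂ) • (S θ *ᵥ ψ) := by
    rw [pow_succ', ← Matrix.mulVec_mulVec, e2, Matrix.mulVec_smul]
  rw [e2, e3, dotProduct_smul, dotProduct_smul, psi_norm, hs]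
  simp [Complex.smul_re]
  ring
end

section
/- For θ ∈ ℝ, set X = σz, X' = σx, Y = sin θ · σx + cos θ · σz, Y' = cos θ · σx - sin θ · σz, and S(θ) = X ⊗ Y - X ⊗ Y' + X' ⊗ Y + X' ⊗ Y' (Kronecker products). Let φ, χ ∈ ℂ² be unit vectors all of whose components are real, and let ψ = φ ⊗ χ ∈ ℂ⁴ be the product state, with s = ⟨ψ, S(θ) ψ⟩. Then ⟨ψ, S(θ)² ψ⟩ = 4, and the third order cumulant satisfies ⟨ψ, S(θ)³ ψ⟩ - 3 ⟨ψ, S(θ)² ψ⟩ · s + 2 s³ = 2s³ - 4s. -/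
open Matrix Kronecker

noncomputable def Jm : Matrix (Fin 2) (Fin 2) ℂ := !![0, 1; -1, 0]

set_option maxHeartbeats 2000000 in
lemma hSJ (θ : ℝ) : (Jm ⊗ₖ Jm) * S θ = S θ := by
  ext ⟨i, j⟩ ⟨k, l⟩
  simp only [Matrix.mul_apply, Fintype.sum_prod_type, Fin.sum_univ_two,
    S, σx, σz, Jm, Matrix.kroneckerMap_apply, Matrix.add_apply, Matrix.sub_apply,
    Matrix.smul_apply, Matrix.cons_val', Matrix.cons_val_zero, Matrix.cons_val_one,
    Matrix.head_cons, Matrix.head_fin_const, Matrix.empty_val', Matrix.cons_val_fin_one,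
    smul_eq_mul, Complex.ofReal_sin, Complex.ofReal_cos]
  fin_cases i <;> fin_cases j <;> fin_cases k <;> fin_cases l <;>
    norm_num [Prod.ext_iff] <;> ring

set_option maxHeartbeats 2000000 in
lemma hS2 (θ : ℝ) : S θ ^ 2 = (4:ℂ) • (1 : Matrix (Fin 2 × Fin 2) (Fin 2 × Fin 2) ℂ)
    + (4:ℂ) • (Jm ⊗ₖ Jm) := by
  have huv : Complex.sin θ ^ 2 + Complex.cos θ ^ 2 = 1 := Complex.sin_sq_add_cos_sq θ
  rw [pow_two]
  ext ⟨i, j⟩ ⟨k, l⟩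
  simp only [Matrix.mul_apply, Fintype.sum_prod_type, Fin.sum_univ_two,
    S, σx, σz, Jm, Matrix.kroneckerMap_apply, Matrix.add_apply, Matrix.sub_apply,
    Matrix.smul_apply, Matrix.one_apply, Matrix.cons_val', Matrix.cons_val_zero,
    Matrix.cons_val_one, Matrix.head_cons, Matrix.head_fin_const, Matrix.empty_val',
    Matrix.cons_val_fin_one, smul_eq_mul, Complex.ofReal_sin, Complex.ofReal_cos]
  fin_cases i <;> fin_cases j <;> fin_cases k <;> fin_cases l <;> norm_num [Prod.ext_iff] <;>
    first
      | ring1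
      | linear_combination 2*huv
      | linear_combination (-2:ℂ)*huv
      | linear_combination 4*huv
      | linear_combination (-4:ℂ)*huv

lemma hS3 (θ : ℝ) : S θ ^ 3 = (8:ℂ) • S θ := by
  rw [pow_succ, hS2, Matrix.add_mul, Matrix.smul_mul, Matrix.smul_mul, Matrix.one_mul, hSJ]
  module

theorem stmt_17 (θ : ℝ) (φ χ : Fin 2 → ℂ)
    (hφn : star φ ⬝ᵥ φ = 1) (hχn : star χ ⬝ᵥ χ = 1)
    (hφre : ∀ i, (φ i).im = 0) (hχre : ∀ i, (χ i).im = 0)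
    (ψ : Fin 2 × Fin 2 → ℂ) (hψ : ψ = fun p => φ p.1 * χ p.2)
    (s : ℝ) (hs : s = (star ψ ⬝ᵥ (S θ *ᵥ ψ)).re) :
    star ψ ⬝ᵥ ((S θ ^ 2) *ᵥ ψ) = 4 ∧
    (star ψ ⬝ᵥ ((S θ ^ 3) *ᵥ ψ)).re - 3 * (star ψ ⬝ᵥ ((S θ ^ 2) *ᵥ ψ)).re * s + 2 * s ^ 3 =
      2 * s ^ 3 - 4 * s := by
  have hφ0 : φ 0 = ((φ 0).re : ℂ) := by apply Complex.ext <;> simp [hφre]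
  have hφ1 : φ 1 = ((φ 1).re : ℂ) := by apply Complex.ext <;> simp [hφre]
  have hχ0 : χ 0 = ((χ 0).re : ℂ) := by apply Complex.ext <;> simp [hχre]
  have hχ1 : χ 1 = ((χ 1).re : ℂ) := by apply Complex.ext <;> simp [hχre]
  set a := (φ 0).re; set b := (φ 1).re; set c := (χ 0).re; set d := (χ 1).re
  rw [dotProduct, Fin.sum_univ_two] at hφn hχn
  simp only [Pi.star_apply, hφ0, hφ1, hχ0, hχ1, RCLike.star_def, Complex.conj_ofReal] at hφn hχn
  -- ψ norm and Jm expectation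
  have hnorm : star ψ ⬝ᵥ ψ = 1 := by
    subst hψ
    simp only [dotProduct, Fintype.sum_prod_type, Fin.sum_univ_two, Pi.star_apply,
      hφ0, hφ1, hχ0, hχ1, star_mul', RCLike.star_def, Complex.conj_ofReal]
    linear_combination ((c:ℂ)*c + (d:ℂ)*d) * hφn + hχn
  have hJJ : star ψ ⬝ᵥ ((Jm ⊗ₖ Jm) *ᵥ ψ) = 0 := by
    subst hψ
    simp only [dotProduct, Matrix.mulVec, Fintype.sum_prod_type, Fin.sum_univ_two,
      Pi.star_apply, Jm, Matrix.kroneckerMap_apply, Matrix.cons_val', Matrix.cons_val_zero,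
      Matrix.cons_val_one, Matrix.head_cons, Matrix.head_fin_const, Matrix.empty_val',
      Matrix.cons_val_fin_one, hφ0, hφ1, hχ0, hχ1, star_mul', RCLike.star_def,
      Complex.conj_ofReal]
    norm_num
    ring
  have h2 : star ψ ⬝ᵥ ((S θ ^ 2) *ᵥ ψ) = 4 := by
    rw [hS2, Matrix.add_mulVec, Matrix.smul_mulVec, Matrix.smul_mulVec,
      Matrix.one_mulVec, dotProduct_add, dotProduct_smul, dotProduct_smul, hnorm, hJJ]
    simp
  refine ⟨h2, ?_⟩
  have h3 : star ψ ⬝ᵥ ((S θ ^ 3) *ᵥ ψ) = 8 * (star ψ ⬝ᵥ (S θ *ᵥ ψ)) := by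
    rw [hS3, Matrix.smul_mulVec, dotProduct_smul, smul_eq_mul]
  rw [h3, h2, hs]
  simp [Complex.mul_re]
  ring
end
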